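/- Let V be a finite set with |V| = 2N vertices and let w assign to each unordered pair of distinct vertices of V a nonnegative real weight. For 0 ≤ k ≤ N, a k-matching is a set of k pairwise vertex-disjoint unordered pairs of distinct vertices of V, with total weight Σ_{e ∈ M} w(e). Fix 1 ≤ n ≤ N − 1 and suppose that the minimum-weight n-matching Mₙ and the minimum-weight (n+1)-matching M_{n+1} are each unique (the minimum is attained by exactly one matching of the respective size). Then every vertex covered by Mₙ is also covered by M_{n+1}; i.e., the set of vertices used by the optimal n-matching is contained in the set of vertices used by the optimal (n+1)-matching. -/

import Mathlib

/-!
Suppose `v` is covered by the optimal `n`-matching `A` through an edge `e`, but not by the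
optimal `(n + 1)`-matching `B`. A connected component of `A ∆ B` with `m` edges has at most
`m + 1` vertices, and the edges of either matching in it cover twice their number of them, so
the numbers of its edges in `A` and in `B` differ by at most one; in the component of `e` the
vertex `v` is not covered by `B`, so it has no surplus of `B`-edges. As `B` has one edge more
than `A`, some union `S` of components containing `e` has as many edges in `A` as in `B`. Then
`A ∆ S` is an `n`-matching and `B ∆ S` an `(n + 1)`-matching of the same total weight as `A` and
`B` together, so optimality gives `w (B ∆ S) = w B`, and uniqueness gives `B ∆ S = B`,
contradicting `e ∈ B ∆ S`.
-/

/-- `IsKMatching k M` means `M` is a set of `k` pairwise vertex-disjoint edges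
(unordered pairs of distinct vertices) of the complete graph on `V`. -/
def IsKMatching {V : Type*} [DecidableEq V] (k : ℕ) (M : Finset (Sym2 V)) : Prop :=
  M.card = k ∧ (∀ e ∈ M, ¬ e.IsDiag) ∧
    (M : Set (Sym2 V)).Pairwise (fun e f => ∀ v : V, v ∈ e → v ∉ f)

open Finset SimpleGraph
open scoped symmDiff

section

variable {V : Type*}

def IsMatchingFinset (M : Finset (Sym2 V)) : Prop :=
  (∀ e ∈ M, ¬ e.IsDiag) ∧ (M : Set (Sym2 V)).Pairwise (fun e f => ∀ v : V, v ∈ e → v ∉ f)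

lemma isKMatching_iff [DecidableEq V] {k : ℕ} {M : Finset (Sym2 V)} :
    IsKMatching k M ↔ #M = k ∧ IsMatchingFinset M :=
  Iff.rfl

def IsUnionOfComponents (S D : Finset (Sym2 V)) : Prop :=
  S ⊆ D ∧ ∀ e ∈ S, ∀ f ∈ D, ∀ x ∈ e, x ∈ f → f ∈ S

section SymmDiff

variable {α : Type*} [DecidableEq α] {A B S : Finset α}

lemma mem_left_of_subset_symmDiff (hS : S ⊆ A ∆ B) {e : α} (he : e ∈ S) (heB : e ∉ B) : e ∈ A :=
  (mem_symmDiff.mp (hS he)).elim And.left fun h => absurd h.1 heB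

lemma inter_add_inter_of_subset_symmDiff (hS : S ⊆ A ∆ B) : #(S ∩ A) + #(S ∩ B) = #S := by
  rw [← card_union_of_disjoint, ← inter_union_distrib_left, inter_eq_left.mpr]
  · exact fun e he => (mem_symmDiff.mp (hS he)).elim (mem_union_left _ ·.1) (mem_union_right _ ·.1)
  · refine disjoint_left.mpr fun e heA heB => ?_
    rcases mem_symmDiff.mp (hS (mem_inter.mp heA).1) with h | h
    exacts [h.2 (mem_inter.mp heB).2, h.2 (mem_inter.mp heA).2]

lemma sum_symmDiff_add_sum_inter {β : Type*} [AddCommMonoid β] (hS : S ⊆ A ∆ B) (f : α → β) :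
    ∑ e ∈ B ∆ S, f e + ∑ e ∈ S ∩ B, f e = ∑ e ∈ B, f e + ∑ e ∈ S ∩ A, f e := by
  have hSB : S \ B = S ∩ A := by
    ext e
    simp only [mem_sdiff, mem_inter]
    exact ⟨fun h => ⟨h.1, mem_left_of_subset_symmDiff hS h.1 h.2⟩,
      fun h => ⟨h.1, ((mem_symmDiff.mp (hS h.1)).resolve_right fun h' => h'.2 h.2).2⟩⟩
  rw [Finset.symmDiff_def, sum_union disjoint_sdiff_sdiff, hSB, ← sum_inter_add_sum_sdiff B S,
    inter_comm B S]
  abel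

lemma card_symmDiff_add_card_inter (hS : S ⊆ A ∆ B) : #(B ∆ S) + #(S ∩ B) = #B + #(S ∩ A) := by
  simpa only [sum_const, smul_eq_mul, mul_one] using
    sum_symmDiff_add_sum_inter hS (fun _ => (1 : ℕ))

end SymmDiff

namespace IsMatchingFinset

variable {M N : Finset (Sym2 V)}

lemma subset (hM : IsMatchingFinset M) (h : N ⊆ M) : IsMatchingFinset N :=
  ⟨fun e he => hM.1 e (h he), hM.2.mono (coe_subset.mpr h)⟩

lemma eq_of_mem (hM : IsMatchingFinset M) {e f : Sym2 V} {x : V} (he : e ∈ M) (hf : f ∈ M)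
    (hxe : x ∈ e) (hxf : x ∈ f) : e = f :=
  by_contra fun hne => hM.2 he hf hne x hxe hxf

lemma card_biUnion_toFinset [DecidableEq V] (hM : IsMatchingFinset M) :
    #(M.biUnion Sym2.toFinset) = 2 * #M := by
  rw [card_biUnion, sum_congr rfl fun e he => Sym2.card_toFinset_of_not_isDiag e (hM.1 e he),
    sum_const, smul_eq_mul, mul_comm]
  exact fun e he f hf hne => disjoint_left.mpr fun x hxe hxf =>
    hM.2 he hf hne x (Sym2.mem_toFinset.mp hxe) (Sym2.mem_toFinset.mp hxf)

lemma two_mul_card_le_ncard [Finite V] (hM : IsMatchingFinset M) {T : Set V}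
    (hT : ∀ e ∈ M, ∀ x ∈ e, x ∈ T) : 2 * #M ≤ T.ncard := by
  classical
  rw [← hM.card_biUnion_toFinset, ← Set.ncard_coe_finset]
  refine Set.ncard_le_ncard (fun x hx => ?_)
  obtain ⟨e, he, hxe⟩ := mem_biUnion.mp hx
  exact hT e he x (Sym2.mem_toFinset.mp hxe)

lemma symmDiff_of_isUnionOfComponents [DecidableEq V] {A B S : Finset (Sym2 V)}
    (hA : IsMatchingFinset A) (hB : IsMatchingFinset B) (hS : IsUnionOfComponents S (A ∆ B)) :
    IsMatchingFinset (B ∆ S) := by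
  have cross : ∀ e f, e ∈ B → e ∉ S → f ∈ S → f ∉ B → ∀ x ∈ e, x ∉ f := by
    intro e f heB heS hfS hfB x hxe hxf
    have hfA := mem_left_of_subset_symmDiff hS.1 hfS hfB
    by_cases heA : e ∈ A
    · exact heS (hA.eq_of_mem hfA heA hxf hxe ▸ hfS)
    · exact heS (hS.2 f hfS e (mem_symmDiff.mpr (Or.inr ⟨heB, heA⟩)) x hxf hxe)
  refine ⟨fun e he => ?_, fun e he f hf hne x hxe hxf => ?_⟩
  · rcases mem_symmDiff.mp he with ⟨heB, -⟩ | ⟨heS, heB⟩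
    exacts [hB.1 e heB, hA.1 e (mem_left_of_subset_symmDiff hS.1 heS heB)]
  · rcases mem_symmDiff.mp he with ⟨heB, heS⟩ | ⟨heS, heB⟩ <;>
      rcases mem_symmDiff.mp hf with ⟨hfB, hfS⟩ | ⟨hfS, hfB⟩
    · exact hB.2 heB hfB hne x hxe hxf
    · exact cross e f heB heS hfS hfB x hxe hxf
    · exact cross f e hfB hfS heS heB x hxf hxe
    · exact hA.2 (mem_left_of_subset_symmDiff hS.1 heS heB)
        (mem_left_of_subset_symmDiff hS.1 hfS hfB) hne x hxe hxf

end IsMatchingFinset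

namespace SimpleGraph

-- Independent of the choice of `e.out` only when `e` is an edge of `G`.
noncomputable def edgeComponent (G : SimpleGraph V) (e : Sym2 V) : G.ConnectedComponent :=
  G.connectedComponentMk e.out.1

lemma edgeComponent_fromEdgeSet {D : Set (Sym2 V)} {e : Sym2 V} {x : V} (he : e ∈ D)
    (hx : x ∈ e) : (fromEdgeSet D).edgeComponent e = (fromEdgeSet D).connectedComponentMk x := by
  by_cases h : e.out.1 = x
  · rw [edgeComponent, h]
  · apply ConnectedComponent.connectedComponentMk_eq_of_adj
    rw [fromEdgeSet_adj, ← (Sym2.mem_and_mem_iff h).mp ⟨e.out_fst_mem, hx⟩]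
    exact ⟨he, h⟩

lemma ConnectedComponent.ncard_supp_le_fromEdgeSet [Finite V] {D : Set (Sym2 V)}
    (c : (fromEdgeSet D).ConnectedComponent) :
    c.supp.ncard ≤ {e ∈ D | (fromEdgeSet D).edgeComponent e = c}.ncard + 1 := by
  rw [← Nat.card_coe_set_eq, ← Nat.card_coe_set_eq]
  refine c.connected_toSimpleGraph.card_vert_le_card_edgeSet_add_one.trans
    (Nat.add_le_add_right ?_ 1)
  refine Nat.card_le_card_of_injective (fun e => ⟨Sym2.map Subtype.val e.1, ?_⟩) ?_
  · obtain ⟨e, he⟩ := e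
    induction e using Sym2.ind with
    | _ a b =>
      have hab : s(a.1, b.1) ∈ D ∧ a.1 ≠ b.1 := he
      refine ⟨hab.1, ?_⟩
      rw [Sym2.map_mk, edgeComponent_fromEdgeSet hab.1 (Sym2.mem_mk_left _ _)]
      exact a.2
  · intro e f hef
    exact Subtype.ext (Sym2.map.injective Subtype.val_injective (congrArg Subtype.val hef))

end SimpleGraph

section ComponentEdges

variable {D : Finset (Sym2 V)}

open scoped Classical in
noncomputable def componentEdges (D : Finset (Sym2 V))
    (K : Finset (fromEdgeSet (D : Set (Sym2 V))).ConnectedComponent) : Finset (Sym2 V) :=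
  {e ∈ D | (fromEdgeSet (D : Set (Sym2 V))).edgeComponent e ∈ K}

lemma mem_componentEdges {K : Finset (fromEdgeSet (D : Set (Sym2 V))).ConnectedComponent}
    {e : Sym2 V} :
    e ∈ componentEdges D K ↔ e ∈ D ∧ (fromEdgeSet (D : Set (Sym2 V))).edgeComponent e ∈ K := by
  classical
  rw [componentEdges, mem_filter]

lemma componentEdges_univ [Fintype V] [DecidableEq V] :
    componentEdges D univ = D := by
  ext e
  simp [mem_componentEdges]

lemma isUnionOfComponents_componentEdges
    (K : Finset (fromEdgeSet (D : Set (Sym2 V))).ConnectedComponent) :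
    IsUnionOfComponents (componentEdges D K) D := by
  refine ⟨fun e he => (mem_componentEdges.mp he).1, fun e he f hf x hxe hxf => ?_⟩
  obtain ⟨heD, heK⟩ := mem_componentEdges.mp he
  rw [mem_componentEdges, edgeComponent_fromEdgeSet (mem_coe.mpr hf) hxf]
  rw [edgeComponent_fromEdgeSet (mem_coe.mpr heD) hxe] at heK
  exact ⟨hf, heK⟩

lemma mem_supp_of_mem_componentEdges {c : (fromEdgeSet (D : Set (Sym2 V))).ConnectedComponent}
    {e : Sym2 V} {x : V} (he : e ∈ componentEdges D {c}) (hx : x ∈ e) : x ∈ c.supp := by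
  obtain ⟨heD, hec⟩ := mem_componentEdges.mp he
  rw [mem_singleton, edgeComponent_fromEdgeSet (mem_coe.mpr heD) hx] at hec
  exact hec

lemma card_componentEdges_inter [DecidableEq V]
    (K : Finset (fromEdgeSet (D : Set (Sym2 V))).ConnectedComponent) (M : Finset (Sym2 V)) :
    #(componentEdges D K ∩ M) = ∑ c ∈ K, #(componentEdges D {c} ∩ M) := by
  classical
  rw [card_eq_sum_card_fiberwise (f := (fromEdgeSet (D : Set (Sym2 V))).edgeComponent)
    fun e he => (mem_componentEdges.mp (mem_inter.mp he).1).2]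
  refine sum_congr rfl fun c hc => congrArg card (ext fun e => ?_)
  simp only [mem_filter, mem_inter, mem_componentEdges, mem_singleton]
  constructor
  · rintro ⟨⟨⟨heD, -⟩, heM⟩, rfl⟩
    exact ⟨⟨heD, rfl⟩, heM⟩
  · rintro ⟨⟨heD, rfl⟩, heM⟩
    exact ⟨⟨⟨heD, hc⟩, heM⟩, rfl⟩

lemma ncard_supp_le_card_componentEdges [Finite V]
    (c : (fromEdgeSet (D : Set (Sym2 V))).ConnectedComponent) :
    c.supp.ncard ≤ #(componentEdges D {c}) + 1 := by
  refine c.ncard_supp_le_fromEdgeSet.trans (Nat.add_le_add_right ?_ 1)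
  rw [← Set.ncard_coe_finset]
  refine Set.ncard_le_ncard (fun e he => ?_)
  exact mem_componentEdges.mpr ⟨he.1, mem_singleton.mpr he.2⟩

variable [Finite V] [DecidableEq V] {M M' : Finset (Sym2 V)}

lemma card_componentEdges_inter_le_add_one (hM : IsMatchingFinset M) (hD : D ⊆ M ∆ M')
    (c : (fromEdgeSet (D : Set (Sym2 V))).ConnectedComponent) :
    #(componentEdges D {c} ∩ M) ≤ #(componentEdges D {c} ∩ M') + 1 := by
  have hcov := (hM.subset inter_subset_right).two_mul_card_le_ncard (T := c.supp)
    fun e he x hx => mem_supp_of_mem_componentEdges (mem_inter.mp he).1 hx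
  have hsplit := inter_add_inter_of_subset_symmDiff
    ((isUnionOfComponents_componentEdges {c}).1.trans hD)
  have := ncard_supp_le_card_componentEdges c
  omega

lemma card_componentEdges_inter_le_of_notMem (hM : IsMatchingFinset M) (hD : D ⊆ M ∆ M')
    {c : (fromEdgeSet (D : Set (Sym2 V))).ConnectedComponent} {x : V} (hxc : x ∈ c.supp)
    (hxM : ∀ f ∈ M, x ∉ f) :
    #(componentEdges D {c} ∩ M) ≤ #(componentEdges D {c} ∩ M') := by
  have hcov := (hM.subset inter_subset_right).two_mul_card_le_ncard (T := c.supp \ {x})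
    fun e he y hy => ⟨mem_supp_of_mem_componentEdges (mem_inter.mp he).1 hy,
      fun hyx => hxM e (mem_inter.mp he).2 (hyx ▸ hy)⟩
  rw [Set.ncard_sdiff_singleton_of_mem hxc] at hcov
  have hsplit := inter_add_inter_of_subset_symmDiff
    ((isUnionOfComponents_componentEdges {c}).1.trans hD)
  have := ncard_supp_le_card_componentEdges c
  have : 0 < c.supp.ncard := (Set.ncard_pos).mpr ⟨x, hxc⟩
  omega

end ComponentEdges

lemma exists_mem_sum_eq_zero {ι : Type*} [Fintype ι] [DecidableEq ι] (φ : ι → ℤ)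
    (hle : ∀ i, φ i ≤ 1) (hsum : 0 ≤ ∑ i, φ i) {i₀ : ι} (h₀ : -1 ≤ φ i₀) (h₀' : φ i₀ ≤ 0) :
    ∃ K : Finset ι, i₀ ∈ K ∧ ∑ i ∈ K, φ i = 0 := by
  rcases h₀.eq_or_lt with h | h
  · obtain ⟨i, hi, hpos⟩ : ∃ i ∈ univ.erase i₀, 0 < φ i := by
      by_contra! hneg
      rw [← add_sum_erase univ φ (mem_univ i₀)] at hsum
      linarith [sum_nonpos hneg]
    refine ⟨{i₀, i}, mem_insert_self _ _, ?_⟩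
    rw [sum_pair (ne_of_mem_erase hi).symm]
    linarith [hle i]
  · exact ⟨{i₀}, mem_singleton_self _, by rw [sum_singleton]; omega⟩

theorem IsMatchingFinset.exists_balanced_of_notMem [Fintype V] [DecidableEq V]
    {A B : Finset (Sym2 V)} (hA : IsMatchingFinset A) (hB : IsMatchingFinset B)
    (hcard : #B = #A + 1) {e : Sym2 V} {x : V} (he : e ∈ A) (hx : x ∈ e) (hxB : ∀ f ∈ B, x ∉ f) :
    ∃ S, IsUnionOfComponents S (A ∆ B) ∧ e ∈ S ∧ #(S ∩ A) = #(S ∩ B) := by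
  classical
  set D := A ∆ B
  set G := fromEdgeSet (D : Set (Sym2 V))
  have hDBA : D ⊆ B ∆ A := (symmDiff_comm A B).le
  have heD : e ∈ D := mem_symmDiff.mpr (Or.inl ⟨he, fun heB => hxB e heB hx⟩)
  have hx₀ : x ∈ (G.connectedComponentMk x).supp := (ConnectedComponent.mem_supp_iff _ x).mpr rfl
  have hsum : #(D ∩ B) = #(D ∩ A) + 1 := by
    have h := card_symmDiff_add_card_inter (subset_refl D)
    rw [show B ∆ (A ∆ B) = A by rw [symmDiff_comm A B, symmDiff_symmDiff_cancel_left]] at h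
    omega
  rw [← componentEdges_univ (D := D), card_componentEdges_inter, card_componentEdges_inter] at hsum
  obtain ⟨K, hK, hKsum⟩ := exists_mem_sum_eq_zero (i₀ := G.connectedComponentMk x)
    (fun c => (#(componentEdges D {c} ∩ B) : ℤ) - #(componentEdges D {c} ∩ A))
    (fun c => by have := card_componentEdges_inter_le_add_one hB hDBA c; omega)
    (by rw [sum_sub_distrib, ← Nat.cast_sum, ← Nat.cast_sum]; omega)
    (by
      have := card_componentEdges_inter_le_add_one hA (subset_refl D) (G.connectedComponentMk x)
      omega)
    (by have := card_componentEdges_inter_le_of_notMem hB hDBA hx₀ hxB; omega)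
  refine ⟨componentEdges D K, isUnionOfComponents_componentEdges K, ?_, ?_⟩
  · exact mem_componentEdges.mpr ⟨heD, edgeComponent_fromEdgeSet (mem_coe.mpr heD) hx ▸ hK⟩
  · rw [sum_sub_distrib, ← Nat.cast_sum, ← Nat.cast_sum, ← card_componentEdges_inter,
      ← card_componentEdges_inter] at hKsum
    omega

end

theorem stmt_17_general {V : Type*} [Fintype V] [DecidableEq V]
    (w : Sym2 V → ℝ)
    (n : ℕ)
    (Mn Mn1 : Finset (Sym2 V))
    (hMn : IsKMatching n Mn) (hMn1 : IsKMatching (n + 1) Mn1)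
    (hMnopt : ∀ M : Finset (Sym2 V), IsKMatching n M → ∑ e ∈ Mn, w e ≤ ∑ e ∈ M, w e)
    (hMn1opt : ∀ M : Finset (Sym2 V), IsKMatching (n + 1) M → ∑ e ∈ Mn1, w e ≤ ∑ e ∈ M, w e)
    (hMn1uniq : ∀ M : Finset (Sym2 V), IsKMatching (n + 1) M →
      (∑ e ∈ M, w e) = ∑ e ∈ Mn1, w e → M = Mn1) :
    ∀ v : V, (∃ e ∈ Mn, v ∈ e) → (∃ e ∈ Mn1, v ∈ e) := by
  rintro v ⟨e, he, hve⟩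
  by_contra! hv
  obtain ⟨hcardA, hA⟩ := isKMatching_iff.mp hMn
  obtain ⟨hcardB, hB⟩ := isKMatching_iff.mp hMn1
  obtain ⟨S, hS, heS, hbal⟩ := hA.exists_balanced_of_notMem hB (by omega) he hve hv
  have hS' : IsUnionOfComponents S (Mn1 ∆ Mn) := by rwa [symmDiff_comm]
  have hA' : IsKMatching n (Mn ∆ S) := isKMatching_iff.mpr
    ⟨by have := card_symmDiff_add_card_inter hS'.1; omega,
      hB.symmDiff_of_isUnionOfComponents hA hS'⟩
  have hB' : IsKMatching (n + 1) (Mn1 ∆ S) := isKMatching_iff.mpr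
    ⟨by have := card_symmDiff_add_card_inter hS.1; omega,
      hA.symmDiff_of_isUnionOfComponents hB hS⟩
  have hw := sum_symmDiff_add_sum_inter hS.1 w
  have hw' := sum_symmDiff_add_sum_inter hS'.1 w
  have hB'_eq := hMn1uniq _ hB' (by linarith [hMnopt _ hA', hMn1opt _ hB'])
  exact hv e (hB'_eq ▸ mem_symmDiff.mpr (Or.inr ⟨heS, fun h => hv e h hve⟩)) hve

/-- Stability of optimal partial matchings: on a complete graph with `2N` vertices and
nonnegative edge weights, if the minimum-weight `n`-matching `Mn` and the minimum-weight
`(n+1)`-matching `Mn1` are each unique, then every vertex covered by `Mn` is also covered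
by `Mn1`. -/
theorem stmt_17 {V : Type*} [Fintype V] [DecidableEq V] (N : ℕ)
    (hV : Fintype.card V = 2 * N)
    (w : Sym2 V → ℝ) (hw : ∀ e, 0 ≤ w e)
    (n : ℕ) (hn : 1 ≤ n) (hnN : n ≤ N - 1)
    (Mn Mn1 : Finset (Sym2 V))
    (hMn : IsKMatching n Mn) (hMn1 : IsKMatching (n + 1) Mn1)
    (hMnopt : ∀ M : Finset (Sym2 V), IsKMatching n M → ∑ e ∈ Mn, w e ≤ ∑ e ∈ M, w e)
    (hMn1opt : ∀ M : Finset (Sym2 V), IsKMatching (n + 1) M → ∑ e ∈ Mn1, w e ≤ ∑ e ∈ M, w e)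
    (hMnuniq : ∀ M : Finset (Sym2 V), IsKMatching n M → (∑ e ∈ M, w e) = ∑ e ∈ Mn, w e → M = Mn)
    (hMn1uniq : ∀ M : Finset (Sym2 V), IsKMatching (n + 1) M →
      (∑ e ∈ M, w e) = ∑ e ∈ Mn1, w e → M = Mn1) :
    ∀ v : V, (∃ e ∈ Mn, v ∈ e) → (∃ e ∈ Mn1, v ∈ e) :=
  stmt_17_general w n Mn Mn1 hMn hMn1 hMnopt hMn1opt hMn1uniq
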